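/- arXiv:1507.02370 — 4 statements merged into one kernel-verified Lean document; each statement's English description precedes it below -/
import Mathlib

section
/- Let G be a finite cyclic group and A a G-module that is a finitely generated free abelian group with a Z-basis X that is permuted by G (X is a G-set). Then the Herbrand quotient h(G, A) equals the product over G-orbit representatives x in X/G of the order of the stabilizer G_x. -/
/-!
Write `a : A` in the permutation basis as a function on `X`. Since `σ` generates `G`, the
`G`-orbits in `X` are `σ`-cycles, and `N a = 0` says that the coordinates of `a` sum to zero
around every cycle; partial sums along the cycles then give `c` with `(1 - σ) c = a`, so
`H¹ = 0`. A fixed element has coordinates constant on orbits, and `N c` has coordinate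
`|G_x| · ∑_{z ∈ G x} c z` at `x`. Hence reading off coordinates at orbit representatives
identifies `A^G` with `ℤ^{X/G}` and `N A` with `∏ |G_x| ℤ`, so `#Ĥ⁰ = ∏ |G_x|`.
-/

variable (G : Type*) [Group G] [Fintype G] (A : Type*) [AddCommGroup A] [DistribMulAction G A]

/-- The norm map `a ↦ ∑_{τ ∈ G} τ • a`. -/
noncomputable def normMap : A →+ A := ∑ τ : G, DistribMulAction.toAddMonoidHom A τ

/-- The map `a ↦ a - σ • a`. -/
def oneSubMap (σ : G) : A →+ A := AddMonoidHom.id A - DistribMulAction.toAddMonoidHom A σ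

/-- The subgroup of `G`-fixed points `A^G`. -/
def fixedSub : AddSubgroup A where
  carrier := {a | ∀ τ : G, τ • a = a}
  zero_mem' := fun τ => smul_zero τ
  add_mem' := fun ha hb τ => by rw [smul_add, ha τ, hb τ]
  neg_mem' := fun ha τ => by rw [smul_neg, ha τ]

/-- `#H¹(G,A)` for `G` cyclic with generator `σ`, computed as `#(ker N_G / (1-σ)A)`. -/
noncomputable def H1card (σ : G) : ℕ :=
  Nat.card ((normMap G A).ker ⧸ ((oneSubMap G A σ).range.addSubgroupOf (normMap G A).ker))

/-- `#Ĥ⁰(G,A) = (A^G : N_G A)`. -/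
noncomputable def H0card : ℕ :=
  Nat.card (fixedSub G A ⧸ ((normMap G A).range.addSubgroupOf (fixedSub G A)))

/-- The Herbrand quotient `h(G,A) = #Ĥ⁰(G,A) / #H¹(G,A)`. -/
noncomputable def herbrand (σ : G) : ℚ := (H0card G A : ℚ) / (H1card G A σ : ℚ)

open MulAction Finset

section PowSums

variable {M : Type*} [Monoid M] {X : Type*} [MulAction M X] {V : Type*} [AddCommMonoid V]

theorem sum_range_add_pow_smul (f : X → V) (s : M) (x : X) (k t : ℕ) :
    ∑ j ∈ range (k + t), f (s ^ j • x) =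
      ∑ j ∈ range k, f (s ^ j • x) + ∑ j ∈ range t, f (s ^ j • s ^ k • x) := by
  rw [sum_range_add]
  congr 1
  refine sum_congr rfl fun j _ => ?_
  rw [← mul_smul, ← pow_add, add_comm]

theorem sum_range_mul_pow_smul_of_pow_smul_eq (f : X → V) {s : M} {x : X} {t : ℕ}
    (ht : s ^ t • x = x) (u : ℕ) :
    ∑ j ∈ range (u * t), f (s ^ j • x) = u • ∑ j ∈ range t, f (s ^ j • x) := by
  induction u with
  | zero => simp
  | succ u ih => rw [add_mul, one_mul, add_comm, sum_range_add_pow_smul, ht, ih, succ_nsmul']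

end PowSums

section Cyclic

variable {G : Type*} [Group G] [Fintype G] {σ : G}

theorem sum_range_orderOf_pow {V : Type*} [AddCommMonoid V]
    (hσ : ∀ τ : G, τ ∈ Subgroup.zpowers σ) (f : G → V) :
    ∑ j ∈ range (orderOf σ), f (σ ^ j) = ∑ τ, f τ := by
  classical
  rw [← IsCyclic.image_range_orderOf hσ, sum_image]
  intro i hi j hj
  exact pow_injOn_Iio_orderOf (by simpa using hi) (by simpa using hj)

variable {X : Type*} [MulAction G X] {V : Type*} [AddCommGroup V] [IsAddTorsionFree V]

theorem sum_range_pow_smul_eq_zero (hσ : ∀ τ : G, τ ∈ Subgroup.zpowers σ) {f : X → V}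
    (hf : ∀ x, ∑ τ : G, f (τ • x) = 0) {x : X} {t : ℕ} (ht : σ ^ t • x = x) :
    ∑ j ∈ range t, f (σ ^ j • x) = 0 := by
  have hperiod : ∀ z : X, ∑ j ∈ range (orderOf σ), f (σ ^ j • z) = 0 := fun z => by
    rw [sum_range_orderOf_pow hσ (fun τ => f (τ • z)), hf]
  have hσx : σ ^ orderOf σ • x = x := by rw [pow_orderOf_eq_one, one_smul]
  -- the sum over `range (t * orderOf σ)` is `orderOf σ` copies of the sum over `range t`
  -- and `t` copies of the vanishing sum over `range (orderOf σ)`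
  have : orderOf σ • ∑ j ∈ range t, f (σ ^ j • x) = 0 := by
    rw [← sum_range_mul_pow_smul_of_pow_smul_eq f ht, mul_comm,
      sum_range_mul_pow_smul_of_pow_smul_eq f hσx, hperiod, smul_zero]
  exact nsmul_right_injective (orderOf_pos σ).ne' (this.trans (smul_zero _).symm)

theorem sum_range_pow_smul_congr (hσ : ∀ τ : G, τ ∈ Subgroup.zpowers σ) {f : X → V}
    (hf : ∀ x, ∑ τ : G, f (τ • x) = 0) {x : X} {k l : ℕ} (h : σ ^ k • x = σ ^ l • x) :
    ∑ j ∈ range k, f (σ ^ j • x) = ∑ j ∈ range l, f (σ ^ j • x) := by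
  wlog hkl : k ≤ l generalizing k l
  · exact (this h.symm (le_of_not_ge hkl)).symm
  obtain ⟨t, rfl⟩ := Nat.exists_eq_add_of_le hkl
  have ht : σ ^ t • σ ^ k • x = σ ^ k • x := by rwa [← mul_smul, ← pow_add, add_comm, eq_comm]
  rw [sum_range_add_pow_smul, sum_range_pow_smul_eq_zero hσ hf ht, add_zero]

theorem exists_sub_inv_smul_eq (hσ : ∀ τ : G, τ ∈ Subgroup.zpowers σ) {f : X → V}
    (hf : ∀ x, ∑ τ : G, f (τ • x) = 0) :
    ∃ g : X → V, ∀ y, g y - g (σ⁻¹ • y) = f y := by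
  let r : X → X := fun y => (⟦y⟧ : orbitRel.Quotient G X).out
  have hr : ∀ y, r (σ⁻¹ • y) = r y := fun y => by
    simp only [r, orbitRel.Quotient.quotient_smul_eq]
  have hk : ∀ y, ∃ k : ℕ, σ ^ k • r y = y := fun y => by
    obtain ⟨τ, hτ : τ • y = r y⟩ := Quotient.mk_out (s := orbitRel G X) y
    obtain ⟨k, hk : σ ^ k = τ⁻¹⟩ := mem_powers_iff_mem_zpowers.mpr (hσ τ⁻¹)
    exact ⟨k, by rw [hk, ← hτ, inv_smul_smul]⟩
  choose k hk using hk
  -- `g y` sums `f` along the `σ`-cycle from its base point up to `y`; by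
  -- `sum_range_pow_smul_congr` this does not depend on how many laps are taken.
  refine ⟨fun y => ∑ j ∈ range (k y + 1), f (σ ^ j • r y), fun y => ?_⟩
  have hprev : σ ^ (k (σ⁻¹ • y) + 1) • r y = σ ^ k y • r y := by
    rw [pow_succ', mul_smul, ← hr, hk, smul_inv_smul, hr, hk]
  simp only [hr, sum_range_pow_smul_congr hσ hf hprev, sum_range_succ, hk, add_sub_cancel_left]

end Cyclic

section OrbitSums

variable {G X : Type*} [Group G] [Fintype G] [MulAction G X] [DecidableEq X]

theorem card_filter_smul_eq_card_stabilizer (x : X) (τ₀ : G) :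
    #{τ : G | τ • x = τ₀ • x} = Nat.card (stabilizer G x) := by
  rw [← Fintype.card_subtype, ← Nat.card_eq_fintype_card]
  exact Nat.card_congr (Equiv.subtypeEquiv (Equiv.mulLeft τ₀⁻¹) fun τ => by
    simp [mul_smul, inv_smul_eq_iff])

theorem sum_smul_eq_card_stabilizer_nsmul {V : Type*} [AddCommMonoid V] (f : X → V) (x : X) :
    ∑ τ : G, f (τ • x) = Nat.card (stabilizer G x) • ∑ y ∈ univ.image fun τ : G => τ • x, f y := by
  rw [sum_comp, smul_sum]
  refine sum_congr rfl fun y hy => ?_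
  obtain ⟨τ₀, -, rfl⟩ := mem_image.mp hy
  rw [card_filter_smul_eq_card_stabilizer]

end OrbitSums

section Coordinates

variable {G A : Type*} [Group G] [AddCommGroup A] [DistribMulAction G A]
  {X : Type*} [MulAction G X] (b : Module.Basis X ℤ A)

theorem repr_equivFun_symm [Finite X] (f : X → ℤ) (x : X) :
    b.repr (b.equivFun.symm f) x = f x := by
  rw [← b.coord_apply, b.coord_equivFun_symm]

theorem repr_smul (hb : ∀ (τ : G) (x : X), τ • b x = b (τ • x)) (τ : G) (a : A) (y : X) :
    b.repr (τ • a) y = b.repr a (τ⁻¹ • y) := by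
  have := b.ext (f₁ := Finsupp.lapply y ∘ₗ b.repr.toLinearMap ∘ₗ DistribSMul.toLinearMap ℤ A τ)
    (f₂ := Finsupp.lapply (τ⁻¹ • y) ∘ₗ b.repr.toLinearMap) fun x => by
      classical
      simp [hb, Finsupp.single_apply, eq_inv_smul_iff]
  exact LinearMap.congr_fun this a

theorem mem_fixedSub_iff (hb : ∀ (τ : G) (x : X), τ • b x = b (τ • x)) {a : A} :
    a ∈ fixedSub G A ↔ ∀ (τ : G) (y : X), b.repr a (τ • y) = b.repr a y := by
  refine ⟨fun ha τ y => ?_, fun ha τ => b.ext_elem fun y => ?_⟩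
  · rw [← inv_inv τ, ← repr_smul b hb, ha]
  · rw [repr_smul b hb, ha]

variable [Fintype G]

theorem repr_normMap (hb : ∀ (τ : G) (x : X), τ • b x = b (τ • x)) (a : A) (y : X) :
    b.repr (normMap G A a) y = ∑ τ : G, b.repr a (τ • y) := by
  simp only [normMap, AddMonoidHom.finsetSum_apply, DistribMulAction.toAddMonoidHom_apply,
    map_sum, Finsupp.finsetSum_apply, repr_smul b hb]
  exact Fintype.sum_equiv (Equiv.inv G) _ _ fun τ => rfl

theorem H1card_eq_one [Finite X] (hb : ∀ (τ : G) (x : X), τ • b x = b (τ • x)) {σ : G}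
    (hσ : ∀ τ : G, τ ∈ Subgroup.zpowers σ) : H1card G A σ = 1 := by
  refine AddSubgroup.index_eq_one.mpr (AddSubgroup.addSubgroupOf_eq_top.mpr fun a ha => ?_)
  obtain ⟨g, hg⟩ := exists_sub_inv_smul_eq hσ (f := ⇑(b.repr a)) fun x => by
    rw [← repr_normMap b hb, ha, map_zero, Finsupp.coe_zero, Pi.zero_apply]
  refine ⟨b.equivFun.symm g, b.ext_elem fun y => ?_⟩
  simp [oneSubMap, repr_smul b hb, repr_equivFun_symm, hg]

theorem mem_range_normMap_iff [Finite X] (hb : ∀ (τ : G) (x : X), τ • b x = b (τ • x)) {a : A}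
    (ha : a ∈ fixedSub G A) :
    a ∈ (normMap G A).range ↔
      ∀ q : orbitRel.Quotient G X, (Nat.card (stabilizer G q.out) : ℤ) ∣ b.repr a q.out := by
  classical
  refine ⟨?_, fun h => ?_⟩
  · rintro ⟨c, rfl⟩ q
    rw [repr_normMap b hb, sum_smul_eq_card_stabilizer_nsmul, nsmul_eq_mul]
    exact dvd_mul_right _ _
  choose d hd using h
  -- the preimage puts the quotient `d q` at the base point of each orbit and `0` elsewhere
  let c : X → ℤ := fun z => if z = (⟦z⟧ : orbitRel.Quotient G X).out then d ⟦z⟧ else 0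
  refine ⟨b.equivFun.symm c, b.ext_elem fun y => ?_⟩
  set q : orbitRel.Quotient G X := ⟦y⟧
  obtain ⟨τ, hτ : τ • y = q.out⟩ := Quotient.mk_out (s := orbitRel G X) y
  have hc : ∑ z ∈ univ.image (fun τ : G => τ • y), c z = d q := by
    have hcz : ∀ z ∈ univ.image (fun τ : G => τ • y), c z = if z = q.out then d q else 0 := by
      simp only [mem_image, mem_univ, true_and, forall_exists_index]
      rintro _ τ' rfl
      simp only [c, orbitRel.Quotient.quotient_smul_eq, q]
    rw [sum_congr rfl hcz, sum_ite_eq', if_pos (mem_image.mpr ⟨τ, mem_univ _, hτ⟩)]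
  have hstab : Nat.card (stabilizer G q.out) = Nat.card (stabilizer G y) :=
    Nat.card_congr (stabilizerEquivStabilizerOfOrbitRel (⟨τ, hτ⟩ : orbitRel G X q.out y)).toEquiv
  simp only [repr_normMap b hb, repr_equivFun_symm]
  rw [sum_smul_eq_card_stabilizer_nsmul, hc, ← hstab, nsmul_eq_mul, ← hd, ← hτ,
    (mem_fixedSub_iff b hb).mp ha]

theorem H0card_eq_finprod [Finite X] (hb : ∀ (τ : G) (x : X), τ • b x = b (τ • x)) :
    H0card G A = ∏ᶠ q : orbitRel.Quotient G X, Nat.card (stabilizer G q.out) := by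
  have := Fintype.ofFinite (orbitRel.Quotient G X)
  let F : fixedSub G A →+ (orbitRel.Quotient G X → ℤ) :=
    AddMonoidHom.mk' (fun a q => b.repr a q.out) fun _ _ => by ext; simp
  have hF : Function.Surjective F := fun v =>
    ⟨⟨b.equivFun.symm fun x => v ⟦x⟧, (mem_fixedSub_iff b hb).mpr fun τ y => by
      simp only [repr_equivFun_symm, orbitRel.Quotient.quotient_smul_eq]⟩,
      funext fun q => by simp only [F, AddMonoidHom.mk'_apply, repr_equivFun_symm, Quotient.out_eq]⟩
  have hrange : (normMap G A).range.addSubgroupOf (fixedSub G A) =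
      (AddSubgroup.pi Set.univ fun q => AddSubgroup.zmultiples
        (Nat.card (stabilizer G q.out) : ℤ)).comap F := by
    ext ⟨a, ha⟩
    simp [AddSubgroup.mem_addSubgroupOf, mem_range_normMap_iff b hb ha, AddSubgroup.mem_pi,
      Int.mem_zmultiples_iff, F]
  rw [H0card, ← AddSubgroup.index, hrange, AddSubgroup.index_comap_of_surjective _ hF,
    AddSubgroup.index_pi, finprod_eq_prod_of_fintype]
  simp [Int.index_zmultiples]

end Coordinates

/-- Let `G` be a finite cyclic group (generator `σ`) and `A` a `G`-module
which is a finitely generated free abelian group with a `ℤ`-basis `X` permuted by `G`.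
Then the Herbrand quotient `h(G,A)` equals the product, over orbit representatives
`x ∈ X/G`, of the order of the stabilizer `G_x`. -/
theorem herbrand_eq_prod_card_stabilizer
    (σ : G) (hgen : ∀ τ : G, τ ∈ Subgroup.zpowers σ)
    (X : Type*) [Finite X] [MulAction G X] (b : Module.Basis X ℤ A)
    (hb : ∀ (τ : G) (x : X), τ • b x = b (τ • x)) :
    herbrand G A σ =
      (∏ᶠ q : Quotient (MulAction.orbitRel G X),
        Nat.card (MulAction.stabilizer G q.out) : ℕ) := by
  rw [herbrand, H1card_eq_one b hb hgen, H0card_eq_finprod b hb, Nat.cast_one, div_one]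
end

section
/- Let G = {1, σ} be a group of order 2 and A a G-module that is a finitely generated abelian group. Then #H¹(G, A) = 2^{r₋(A)} · #(A⁺[2]) / (A : A⁺ + A⁻), where r₋(A) is the rank of A⁻, A⁺ = A^G, A⁻ = {a ∈ A : σa = -a}, and A⁺[2] is the 2-torsion of A⁺. -/
variable (G : Type*) [Group G] [Fintype G] (A : Type*) [AddCommGroup A] [DistribMulAction G A]

/-- The subgroup `A⁻ = {a | σ • a = -a}`. -/
def minusSub (σ : G) : AddSubgroup A where
  carrier := {a | σ • a = -a}
  zero_mem' := by simp
  add_mem' := fun {a b} ha hb => by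
    simp only [Set.mem_setOf_eq] at *; rw [smul_add, ha, hb, neg_add]
  neg_mem' := fun {a} ha => by
    simp only [Set.mem_setOf_eq] at *; rw [smul_neg, ha, neg_neg]

/-!
Since `σ² = 1`, the kernel of the norm `1 + σ` is `A⁻`, so `H¹ = A⁻ / (1 - σ)A`, and
`2A⁻ ≤ (1 - σ)A ≤ A⁻`. The map `a ↦ a - σ • a` sends `A` onto `(1 - σ)A` and `A⁺ + A⁻` is
exactly the preimage of `2A⁻`, so `(A : A⁺ + A⁻) = ((1 - σ)A : 2A⁻)`. The tower then gives
`#H¹ · (A : A⁺ + A⁻) = (A⁻ : 2A⁻) = 2 ^ r₋(A) · #A⁻[2]`, and `A⁻[2] = A⁺[2]` because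
`a = -a` on 2-torsion.
-/

open Module

section NSMul

variable {B C : Type*} [AddCommGroup B] [AddCommGroup C]

instance AddSubgroup.addGroupFG_of_addGroupFG [AddGroup.FG B] (M : AddSubgroup B) :
    AddGroup.FG M :=
  have : Module.Finite ℤ B := Module.Finite.iff_addGroup_fg.mpr ‹_›
  Module.Finite.iff_addGroup_fg.mp (inferInstance : Module.Finite ℤ M.toIntSubmodule)

lemma AddEquiv.index_range_nsmulAddMonoidHom_eq (e : B ≃+ C) (n : ℕ) :
    (nsmulAddMonoidHom (α := B) n).range.index = (nsmulAddMonoidHom (α := C) n).range.index := by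
  rw [← e.map_range_nsmulAddMonoidHom, AddSubgroup.index_map_equiv]

lemma AddEquiv.card_ker_nsmulAddMonoidHom_eq (e : B ≃+ C) (n : ℕ) :
    Nat.card (nsmulAddMonoidHom (α := B) n).ker = Nat.card (nsmulAddMonoidHom (α := C) n).ker :=
  Nat.card_congr <| e.toEquiv.subtypeEquiv fun b => by simp [← map_nsmul]

lemma nsmulAddMonoidHom_prod (n : ℕ) :
    nsmulAddMonoidHom (α := B × C) n = (nsmulAddMonoidHom n).prodMap (nsmulAddMonoidHom n) := by
  ext <;> simp

lemma finrank_prod_of_finite [Finite C] : finrank ℤ (B × C) = finrank ℤ B := by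
  have hker : LinearMap.ker (LinearMap.fst ℤ B C) ≤ Submodule.torsion ℤ (B × C) := by
    rintro ⟨b, c⟩ (rfl : b = 0)
    rw [← Submodule.mem_toAddSubgroup, Submodule.torsion_int]
    exact (AddMonoidHom.inr B C).isOfFinAddOrder (isOfFinAddOrder_of_finite c)
  rw [← finrank_quotient_eq_of_le_torsion hker,
    ((LinearMap.fst ℤ B C).quotKerEquivOfSurjective LinearMap.fst_surjective).finrank_eq]

/-- By the structure theorem, `B ≃ ℤʳ × T` with `T` finite; on `ℤʳ` multiplication by `n` is
injective with cokernel of order `nʳ`, on `T` its kernel and cokernel have the same order. -/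
theorem index_range_nsmulAddMonoidHom_of_fg [AddGroup.FG B] {n : ℕ} (hn : n ≠ 0) :
    (nsmulAddMonoidHom (α := B) n).range.index =
      n ^ finrank ℤ B * Nat.card (nsmulAddMonoidHom (α := B) n).ker := by
  obtain ⟨r, ι, _, p, hp, e, ⟨f⟩⟩ := AddCommGroup.equiv_free_prod_directSum_zmod B
  have : ∀ i, NeZero (p i ^ e i) := fun i => ⟨pow_ne_zero _ (hp i).ne_zero⟩
  have : Finite (DirectSum ι fun i => ZMod (p i ^ e i)) :=
    Finite.of_equiv _ DFinsupp.equivFunOnFintype.symm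
  have hker : (nsmulAddMonoidHom (α := Fin r →₀ ℤ) n).ker = ⊥ :=
    (AddMonoidHom.ker_eq_bot_iff _).mpr
      (AddSubgroup.nsmulAddMonoidHom_injective_of_isTorsionFree hn)
  rw [f.index_range_nsmulAddMonoidHom_eq, f.card_ker_nsmulAddMonoidHom_eq,
    f.toIntLinearEquiv.finrank_eq, finrank_prod_of_finite, nsmulAddMonoidHom_prod,
    AddMonoidHom.range_prodMap, AddMonoidHom.ker_prodMap, AddSubgroup.index_prod,
    AddSubgroup.index_range_nsmul, AddSubgroup.index_range, hker,
    Nat.card_congr (AddSubgroup.prodEquiv _ _).toEquiv, Nat.card_prod]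
  simp

end NSMul

section OrderTwo

variable {G : Type*} [Group G] {A : Type*} [AddCommGroup A] [DistribMulAction G A] {σ : G}

lemma eq_one_or_eq_of_card_eq_two (hG : Nat.card G = 2) (hσ : σ ≠ 1) (τ : G) :
    τ = 1 ∨ τ = σ := by
  obtain ⟨ρ, -, hρ⟩ := (Nat.card_eq_two_iff' (1 : G)).mp hG
  exact or_iff_not_imp_left.mpr fun hτ => (hρ τ hτ).trans (hρ σ hσ).symm

lemma smul_smul_self_of_card_eq_two (hG : Nat.card G = 2) (σ : G) (a : A) : σ • σ • a = a := by
  rw [smul_smul, ← sq, ← hG, pow_card_eq_one', one_smul]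

lemma mem_fixedSub_iff_s2 (hG : Nat.card G = 2) (hσ : σ ≠ 1) {a : A} :
    a ∈ fixedSub G A ↔ σ • a = a := by
  refine ⟨fun h => h σ, fun h τ => ?_⟩
  rcases eq_one_or_eq_of_card_eq_two hG hσ τ with rfl | rfl
  exacts [one_smul G a, h]

lemma mem_minusSub_iff {a : A} : a ∈ minusSub G A σ ↔ σ • a = -a := Iff.rfl

lemma normMap_apply [Fintype G] (hG : Nat.card G = 2) (hσ : σ ≠ 1) (a : A) :
    normMap G A a = a + σ • a := by
  rw [normMap, AddMonoidHom.finsetSum_apply, Fintype.sum_eq_add 1 σ hσ.symm]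
  · simp
  · rintro τ ⟨h1, hσ'⟩
    exact ((eq_one_or_eq_of_card_eq_two hG hσ τ).elim h1 hσ').elim

lemma ker_normMap [Fintype G] (hG : Nat.card G = 2) (hσ : σ ≠ 1) :
    (normMap G A).ker = minusSub G A σ := by
  ext a
  rw [AddMonoidHom.mem_ker, normMap_apply hG hσ, mem_minusSub_iff, add_eq_zero_iff_neg_eq,
    eq_comm]

lemma H1card_eq_relIndex [Fintype G] (hG : Nat.card G = 2) (hσ : σ ≠ 1) :
    H1card G A σ = (oneSubMap G A σ).range.relIndex (minusSub G A σ) := by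
  rw [H1card, ker_normMap hG hσ]
  rfl

lemma oneSubMap_apply (a : A) : oneSubMap G A σ a = a - σ • a := rfl

lemma oneSubMap_apply_of_mem_minusSub {m : A} (hm : m ∈ minusSub G A σ) :
    oneSubMap G A σ m = 2 • m := by
  rw [oneSubMap_apply, hm, sub_neg_eq_add, two_nsmul]

lemma range_oneSubMap_le_minusSub (hG : Nat.card G = 2) (σ : G) :
    (oneSubMap G A σ).range ≤ minusSub G A σ := by
  rintro _ ⟨a, rfl⟩
  rw [mem_minusSub_iff, oneSubMap_apply, smul_sub, smul_smul_self_of_card_eq_two hG, neg_sub]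

lemma map_two_nsmul_minusSub_le_range_oneSubMap :
    (minusSub G A σ).map (nsmulAddMonoidHom 2) ≤ (oneSubMap G A σ).range := by
  rintro _ ⟨m, hm, rfl⟩
  exact ⟨m, oneSubMap_apply_of_mem_minusSub hm⟩

lemma comap_oneSubMap_map_two_nsmul_minusSub (hG : Nat.card G = 2) (hσ : σ ≠ 1) :
    ((minusSub G A σ).map (nsmulAddMonoidHom 2)).comap (oneSubMap G A σ) =
      fixedSub G A ⊔ minusSub G A σ := by
  ext a
  simp only [AddSubgroup.mem_comap, AddSubgroup.mem_map, AddSubgroup.mem_sup]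
  constructor
  · rintro ⟨m, hm, h⟩
    have hσa : σ • a = a - 2 • m := by
      rw [nsmulAddMonoidHom_apply, oneSubMap_apply] at h
      rw [h, sub_sub_cancel]
    refine ⟨a - m, ?_, m, hm, sub_add_cancel a m⟩
    rw [mem_fixedSub_iff_s2 hG hσ, smul_sub, hm, hσa, two_nsmul]
    abel
  · rintro ⟨p, hp, m, hm, rfl⟩
    refine ⟨m, hm, ?_⟩
    rw [map_add, oneSubMap_apply p, (mem_fixedSub_iff_s2 hG hσ).mp hp, sub_self, zero_add,
      oneSubMap_apply_of_mem_minusSub hm]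
    rfl

lemma index_fixedSub_sup_minusSub (hG : Nat.card G = 2) (hσ : σ ≠ 1) :
    (fixedSub G A ⊔ minusSub G A σ).index =
      ((minusSub G A σ).map (nsmulAddMonoidHom 2)).relIndex (oneSubMap G A σ).range := by
  rw [← comap_oneSubMap_map_two_nsmul_minusSub hG hσ, AddSubgroup.index_comap]

lemma mem_minusSub_and_two_nsmul_eq_zero_iff (hG : Nat.card G = 2) (hσ : σ ≠ 1) {a : A} :
    a ∈ minusSub G A σ ∧ 2 • a = 0 ↔ a ∈ fixedSub G A ∧ 2 • a = 0 := by
  rw [mem_fixedSub_iff_s2 hG hσ, mem_minusSub_iff, two_nsmul, add_eq_zero_iff_eq_neg]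
  exact ⟨fun ⟨h, ha⟩ => ⟨h.trans ha.symm, ha⟩, fun ⟨h, ha⟩ => ⟨h.trans ha, ha⟩⟩

lemma card_ker_two_nsmul_minusSub (hG : Nat.card G = 2) (hσ : σ ≠ 1) :
    Nat.card (nsmulAddMonoidHom (α := minusSub G A σ) 2).ker =
      Nat.card {a : A // a ∈ fixedSub G A ∧ 2 • a = 0} := by
  refine Nat.card_congr <| (Equiv.subtypeEquivRight fun x => ?_).trans <|
    (Equiv.subtypeSubtypeEquivSubtypeInter (· ∈ minusSub G A σ) (2 • · = (0 : A))).trans <|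
    Equiv.subtypeEquivRight fun a => mem_minusSub_and_two_nsmul_eq_zero_iff hG hσ
  rw [AddMonoidHom.mem_ker, nsmulAddMonoidHom_apply, ← AddSubgroup.coe_nsmul,
    ZeroMemClass.coe_eq_zero]

lemma relIndex_map_two_nsmul_minusSub [AddGroup.FG A] (hG : Nat.card G = 2) (hσ : σ ≠ 1) :
    ((minusSub G A σ).map (nsmulAddMonoidHom 2)).relIndex (minusSub G A σ) =
      2 ^ finrank ℤ (minusSub G A σ) * Nat.card {a : A // a ∈ fixedSub G A ∧ 2 • a = 0} := by
  rw [AddSubgroup.relIndex, AddSubgroup.addSubgroupOf_map_nsmulAddMonoidHom_eq_range,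
    index_range_nsmulAddMonoidHom_of_fg two_ne_zero, card_ker_two_nsmul_minusSub hG hσ]

end OrderTwo

/-- For `G = {1, σ}` of order 2 and `A` a finitely generated `G`-module,
`#H¹(G,A) = 2^{r₋(A)} · #(A⁺[2]) / (A : A⁺ + A⁻)`. -/
theorem h1_card_eq_two_pow_rank_minus_mul_card_two_torsion_div_index
    (hG : Nat.card G = 2) (σ : G) (hσ : σ ≠ 1) [AddGroup.FG A] :
    (H1card G A σ : ℚ) =
      2 ^ (Module.finrank ℤ (minusSub G A σ)) *
        (Nat.card {a : A // a ∈ fixedSub G A ∧ 2 • a = 0} : ℚ) /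
        (Nat.card (A ⧸ (fixedSub G A ⊔ minusSub G A σ)) : ℚ) := by
  have htower := AddSubgroup.relIndex_mul_relIndex _ _ _
    map_two_nsmul_minusSub_le_range_oneSubMap (range_oneSubMap_le_minusSub (A := A) hG σ)
  have hfinite : ((minusSub G A σ).map (nsmulAddMonoidHom 2)).relIndex (minusSub G A σ) ≠ 0 :=
    (AddSubgroup.isFiniteRelIndex_map_nsmulAddMonoidHom_of_fg
      ((AddGroup.fg_iff_addSubgroup_fg _).mp inferInstance) two_ne_zero).relIndex_ne_zero
  rw [← index_fixedSub_sup_minusSub hG hσ, ← H1card_eq_relIndex hG hσ] at htower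
  have hindex : (fixedSub G A ⊔ minusSub G A σ).index ≠ 0 :=
    left_ne_zero_of_mul (htower ▸ hfinite)
  rw [relIndex_map_two_nsmul_minusSub hG hσ] at htower
  rw [eq_div_iff (by exact_mod_cast hindex), mul_comm]
  exact_mod_cast htower
end

section
/- Let G be a finite cyclic group with generator σ of order n, and A a G-module that is a finitely generated abelian group. Then #H¹(G, A) = (ₙA : (1-σ)(ₙA)) / (NA : n·A^G), where ₙA = {a ∈ A : Na = 0} with N = Σ_{τ∈G} τ, and NA = {Na : a ∈ A}. -/
/-! Put `S = ker N ⊔ A^G`. Since `ker (1 - σ) = A^G` and `N = n` on `A^G`, both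
`(1-σ)A / (1-σ)(ₙA)` and `NA / n·A^G` are images of `A ⧸ S`, so both have index `[A : S]`,
which is finite because `n • A ≤ S` and `A` is finitely generated. The claim is then the
tower law for `(1-σ)(ₙA) ≤ (1-σ)A ≤ ₙA`. -/

variable (G : Type*) [Group G] [Fintype G] (A : Type*) [AddCommGroup A] [DistribMulAction G A]

theorem AddSubgroup.relIndex_map_range {M M' : Type*} [AddGroup M] [AddGroup M']
    (f : M →+ M') (H : AddSubgroup M) :
    (H.map f).relIndex f.range = (H ⊔ f.ker).index := by
  rw [← AddSubgroup.index_comap, AddSubgroup.comap_map_eq]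

theorem AddSubgroup.index_ne_zero_of_nsmul_mem {M : Type*} [AddCommGroup M] [AddGroup.FG M]
    (S : AddSubgroup M) {k : ℕ} (hk : 0 < k) (hS : ∀ a, k • a ∈ S) : S.index ≠ 0 := by
  have : Finite (M ⧸ S) := by
    refine AddCommGroup.finite_of_fg_isAddTorsion _ fun x => ?_
    induction x using QuotientAddGroup.induction_on with
    | H a =>
      rw [isOfFinAddOrder_iff_nsmul_eq_zero]
      exact ⟨k, hk, by rw [← QuotientAddGroup.mk_nsmul, QuotientAddGroup.eq_zero_iff]; exact hS a⟩
  exact S.index_ne_zero_of_finite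

section

variable {G A}

theorem normMap_apply_s6 (a : A) : normMap G A a = ∑ τ : G, τ • a := by
  simp [normMap]

theorem normMap_smul (τ : G) (a : A) : normMap G A (τ • a) = normMap G A a := by
  simp only [normMap_apply_s6]
  exact Fintype.sum_equiv (Equiv.mulRight τ) _ _ fun x => by simp [mul_smul]

theorem normMap_mem_fixedSub (a : A) : normMap G A a ∈ fixedSub G A := fun τ => by
  rw [normMap_apply_s6, Finset.smul_sum]
  exact Fintype.sum_equiv (Equiv.mulLeft τ) _ _ fun x => by simp [mul_smul]

theorem normMap_of_mem_fixedSub {a : A} (ha : a ∈ fixedSub G A) :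
    normMap G A a = Fintype.card G • a := by
  rw [normMap_apply_s6, Finset.sum_congr rfl fun τ _ => ha τ, Finset.sum_const, Finset.card_univ]

theorem map_normMap_fixedSub :
    (fixedSub G A).map (normMap G A) = (fixedSub G A).map (Fintype.card G • AddMonoidHom.id A) :=
  AddSubgroup.ext fun _ => exists_congr fun _ => and_congr_right fun ha => by
    rw [normMap_of_mem_fixedSub ha]; rfl

theorem card_nsmul_mem_ker_normMap_sup_fixedSub (a : A) :
    Fintype.card G • a ∈ (normMap G A).ker ⊔ fixedSub G A := by
  have hfix := normMap_mem_fixedSub (G := G) a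
  have hker : Fintype.card G • a - normMap G A a ∈ (normMap G A).ker := by
    rw [AddMonoidHom.mem_ker, map_sub, map_nsmul, normMap_of_mem_fixedSub hfix, sub_self]
  simpa using AddSubgroup.add_mem_sup hker hfix

theorem range_oneSubMap_le_ker_normMap (σ : G) :
    (oneSubMap G A σ).range ≤ (normMap G A).ker := by
  rintro _ ⟨a, rfl⟩
  simp [oneSubMap, normMap_smul]

omit [Fintype G] in
theorem ker_oneSubMap (σ : G) (hgen : ∀ τ : G, τ ∈ Subgroup.zpowers σ) :
    (oneSubMap G A σ).ker = fixedSub G A := by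
  ext a
  simp only [oneSubMap, AddMonoidHom.mem_ker, AddMonoidHom.sub_apply, AddMonoidHom.id_apply,
    DistribMulAction.toAddMonoidHom_apply, sub_eq_zero]
  refine ⟨fun h τ => ?_, fun h => (h σ).symm⟩
  exact Subgroup.zpowers_le.mpr (show σ ∈ MulAction.stabilizer G a from h.symm) (hgen τ)

end

/-- For `G` cyclic of order `n` with generator `σ` and `A` a finitely
generated `G`-module, `#H¹(G,A) = (ₙA : (1-σ)(ₙA)) / (NA : n·A^G)`, where `ₙA = ker N`
and `NA = im N`. -/
theorem h1_card_eq_index_div_index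
    (σ : G) (hgen : ∀ τ : G, τ ∈ Subgroup.zpowers σ) (n : ℕ) (hn : orderOf σ = n)
    [AddGroup.FG A] :
    (H1card G A σ : ℚ) =
      (Nat.card ((normMap G A).ker ⧸
          ((AddSubgroup.map (oneSubMap G A σ) (normMap G A).ker).addSubgroupOf
            (normMap G A).ker)) : ℚ) /
      (Nat.card ((normMap G A).range ⧸
          ((AddSubgroup.map (n • AddMonoidHom.id A) (fixedSub G A)).addSubgroupOf
            (normMap G A).range)) : ℚ) := by
  have hcard : Fintype.card G = n := by
    rw [← hn, orderOf_eq_card_of_forall_mem_zpowers hgen, Nat.card_eq_fintype_card]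
  set S := (normMap G A).ker ⊔ fixedSub G A
  have hS : S.index ≠ 0 :=
    S.index_ne_zero_of_nsmul_mem Fintype.card_pos card_nsmul_mem_ker_normMap_sup_fixedSub
  have hnum : ((normMap G A).ker.map (oneSubMap G A σ)).relIndex (normMap G A).ker =
      S.index * H1card G A σ := by
    rw [← AddSubgroup.relIndex_mul_relIndex _ _ _ (AddSubgroup.map_le_range _ _)
      (range_oneSubMap_le_ker_normMap σ), AddSubgroup.relIndex_map_range, ker_oneSubMap σ hgen]
    rfl
  have hden : ((fixedSub G A).map (n • AddMonoidHom.id A)).relIndex (normMap G A).range =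
      S.index := by
    rw [← hcard, ← map_normMap_fixedSub, AddSubgroup.relIndex_map_range, sup_comm]
  change _ = (AddSubgroup.relIndex _ _ : ℚ) / (AddSubgroup.relIndex _ _ : ℚ)
  rw [hnum, hden, Nat.cast_mul, mul_div_cancel_left₀ _ (Nat.cast_ne_zero.mpr hS)]
end

section
/- Let K be a CM number field with maximal real subfield F = K⁺. Then (U_K : U_F · W_K) divides 2, where U_K, U_F are the unit groups and W_K the roots of unity in K. -/
/-!
Since `F ≅ K⁺` compatibly with the embeddings into `K`, `U_F · W_K` is the subgroup
`realUnits K ⊔ torsion K` of `(𝓞 K)ˣ`. The map `u ↦ u / ū` sends `U_K` into `W_K` with kernel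
`U_F` and maps `W_K` onto `W_K²`, which has index `2` in the cyclic group `W_K` of even order;
hence the index of `U_F · W_K` times the index of the image of `u ↦ u / ū` is `2`.
-/

open NumberField

/-- The unit group `U_K = (𝓞 K)ˣ`, realized as a subgroup of `Kˣ`. -/
noncomputable def UK (K : Type*) [Field K] [NumberField K] : Subgroup Kˣ :=
  (Units.map (algebraMap (𝓞 K) K).toMonoidHom).range

/-- The unit group `U_F = (𝓞 F)ˣ`, realized as a subgroup of `Kˣ` for an extension `K/F`. -/
noncomputable def UFinK (F K : Type*) [Field F] [NumberField F] [Field K] [NumberField K]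
    [Algebra F K] : Subgroup Kˣ :=
  (Units.map ((algebraMap F K).comp (algebraMap (𝓞 F) F)).toMonoidHom).range

namespace NumberField

theorem units_map_algebraMap_injective (K : Type*) [Field K] :
    Function.Injective (Units.map (algebraMap (𝓞 K) K).toMonoidHom) :=
  Units.map_injective RingOfIntegers.coe_injective

theorem torsion_inf_UK_eq_map_torsion (K : Type*) [Field K] [NumberField K] :
    CommGroup.torsion Kˣ ⊓ UK K =
      (Units.torsion K).map (Units.map (algebraMap (𝓞 K) K).toMonoidHom) := by
  rw [Units.torsion, ← CommGroup.comap_torsion_of_injective (units_map_algebraMap_injective K),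
    Subgroup.map_comap_eq, inf_comm]
  rfl

theorem UFinK_eq_map_realUnits (F K : Type*) [Field F] [NumberField F] [Field K] [NumberField K]
    [Algebra F K] [IsTotallyReal F] [IsTotallyComplex K] [Algebra.IsQuadraticExtension F K] :
    UFinK F K = (IsCMField.realUnits K).map (Units.map (algebraMap (𝓞 K) K).toMonoidHom) := by
  ext x
  simp only [UFinK, IsCMField.realUnits, MonoidHom.map_range, MonoidHom.mem_range]
  let e : (𝓞 F)ˣ ≃* (𝓞 (maximalRealSubfield K))ˣ := Units.mapEquiv
    (RingOfIntegers.mapRingEquiv (CMExtension.equivMaximalRealSubfield F K)).toMulEquiv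
  refine e.toEquiv.exists_congr fun u => ?_
  rw [← Units.val_inj, ← Units.val_inj]
  rfl

end NumberField

/-- Let `K` be a CM number field with maximal real subfield `F = K⁺`.
Then `(U_K : U_F · W_K)` divides `2`, where `W_K` is the group of roots of unity in `K`. -/
theorem cm_index_units_dvd_two (F K : Type*) [Field F] [NumberField F] [Field K]
    [NumberField K] [Algebra F K] (hd : Module.finrank F K = 2)
    (htr : ∀ v : InfinitePlace F, v.IsReal) (htc : ∀ w : InfinitePlace K, w.IsComplex) :
    Nat.card (UK K ⧸ ((UFinK F K ⊔ (CommGroup.torsion Kˣ ⊓ UK K)).subgroupOf (UK K))) ∣ 2 := by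
  have : IsTotallyReal F := ⟨htr⟩
  have : IsTotallyComplex K := ⟨htc⟩
  have : Algebra.IsQuadraticExtension F K := ⟨hd⟩
  have : IsCMField K := IsCMField.ofCMExtension F K
  rw [← Subgroup.index, ← Subgroup.relIndex, UFinK_eq_map_realUnits,
    torsion_inf_UK_eq_map_torsion, ← Subgroup.map_sup, UK, MonoidHom.range_eq_map,
    Subgroup.relIndex_map_map_of_injective _ _ (units_map_algebraMap_injective K),
    Subgroup.relIndex_top_right]
  exact Dvd.intro _ (IsCMField.indexRealUnits_mul_eq K)
end
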